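/- arXiv:math/9308203 — 2 statements merged into one kernel-verified Lean document; each statement's English description precedes it below -/
import Mathlib

section
/- If an ideal I on κ is a p-point, then I is prepleasant if and only if I is pleasant. -/
open Set

namespace PaperIdeals

/-- Diagonal union of a family `X` indexed by a set `A` of ordinals. -/
def diagU (A : Set Ordinal.{0}) (X : Ordinal.{0} → Set Ordinal.{0}) : Set Ordinal.{0} :=
  {ξ | ∃ α < ξ, α ∈ A ∧ ξ ∈ X α}

/-- `X` is bounded below `κ`. -/
def BddIn (κ : Cardinal.{0}) (X : Set Ordinal.{0}) : Prop := ∃ θ < κ.ord, X ⊆ Iio θ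

/-- `J` is a `<κ`-complete ideal on `κ` containing all singletons,
closed under subsets and (finite and small) unions. -/
def IsIdeal (κ : Cardinal.{0}) (J : Set Ordinal.{0} → Prop) : Prop :=
  (∀ X, J X → X ⊆ Iio κ.ord) ∧
  (∀ X Y, J X → Y ⊆ X → J Y) ∧
  (∀ X Y, J X → J Y → J (X ∪ Y)) ∧
  (∀ ξ < κ.ord, J {ξ}) ∧
  (∀ θ : Ordinal.{0}, θ.card < κ → ∀ X : Ordinal.{0} → Set Ordinal.{0},
    (∀ α, J (X α)) → J (⋃ α ∈ Iio θ, X α))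

def Proper (κ : Cardinal.{0}) (J : Set Ordinal.{0} → Prop) : Prop := ¬ J (Iio κ.ord)

/-- The coideal `I⁺`. -/
def Pos (κ : Cardinal.{0}) (J : Set Ordinal.{0} → Prop) (X : Set Ordinal.{0}) : Prop :=
  X ⊆ Iio κ.ord ∧ ¬ J X

/-- The dual filter `I*`. -/
def Dual (κ : Cardinal.{0}) (J : Set Ordinal.{0} → Prop) (X : Set Ordinal.{0}) : Prop :=
  X ⊆ Iio κ.ord ∧ J (Iio κ.ord \ X)

/-- The restriction `I ↾ A`. -/
def restrict (κ : Cardinal.{0}) (J : Set Ordinal.{0} → Prop) (A : Set Ordinal.{0})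
    (X : Set Ordinal.{0}) : Prop :=
  X ⊆ Iio κ.ord ∧ J (X ∩ A)

/-- Pleasant: closed under diagonal unions indexed by sets in the ideal. -/
def Pleasant (J : Set Ordinal.{0} → Prop) : Prop :=
  ∀ A, J A → ∀ X : Ordinal.{0} → Set Ordinal.{0}, (∀ α, J (X α)) → J (diagU A X)

/-- Prepleasant: closed under diagonal unions of bounded sets indexed by sets in the ideal. -/
def Prepleasant (κ : Cardinal.{0}) (J : Set Ordinal.{0} → Prop) : Prop :=
  ∀ Q, J Q → ∀ B : Ordinal.{0} → Set Ordinal.{0}, (∀ α, BddIn κ (B α)) → J (diagU Q B)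

/-- Normal: closed under full `κ`-indexed diagonal unions. -/
def Normal (κ : Cardinal.{0}) (J : Set Ordinal.{0} → Prop) : Prop :=
  ∀ X : Ordinal.{0} → Set Ordinal.{0}, (∀ α, J (X α)) → J (diagU (Iio κ.ord) X)

/-- Quasinormal ideal. -/
def Quasinormal (κ : Cardinal.{0}) (J : Set Ordinal.{0} → Prop) : Prop :=
  ∀ X : Ordinal.{0} → Set Ordinal.{0}, (∀ α, J (X α)) →
    ∃ Q, Dual κ J Q ∧ J (diagU Q X)

/-- Club subset of `κ`: unbounded in `κ.ord` and closed under limits. -/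
def IsClubIn (κ : Cardinal.{0}) (C : Set Ordinal.{0}) : Prop :=
  C ⊆ Iio κ.ord ∧ (∀ α < κ.ord, ∃ β ∈ C, α < β) ∧
  (∀ δ < κ.ord, Order.IsSuccLimit δ → (∀ α < δ, ∃ β ∈ C, α < β ∧ β < δ) → δ ∈ C)

/-- Stationary subset of `κ`. -/
def StatIn (κ : Cardinal.{0}) (S : Set Ordinal.{0}) : Prop :=
  S ⊆ Iio κ.ord ∧ ∀ C, IsClubIn κ C → (S ∩ C).Nonempty

/-- The nonstationary ideal `NS κ`. -/
def NS (κ : Cardinal.{0}) (X : Set Ordinal.{0}) : Prop :=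
  X ⊆ Iio κ.ord ∧ ∃ C, IsClubIn κ C ∧ X ∩ C = ∅

/-- Membership in the ideal generated by a family `S`. -/
def genIdeal (κ : Cardinal.{0}) (S : Set Ordinal.{0} → Prop) (X : Set Ordinal.{0}) : Prop :=
  ∀ K, IsIdeal κ K → (∀ Y, S Y → K Y) → K X

/-- Membership in the pleasant closure of `S` (smallest pleasant ideal containing `S`). -/
def PClosure (κ : Cardinal.{0}) (S : Set Ordinal.{0} → Prop) (X : Set Ordinal.{0}) : Prop :=
  ∀ K, IsIdeal κ K → Pleasant K → (∀ Y, S Y → K Y) → K X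

/-- Membership in the prepleasant closure of `S`. -/
def PPClosure (κ : Cardinal.{0}) (S : Set Ordinal.{0} → Prop) (X : Set Ordinal.{0}) : Prop :=
  ∀ K, IsIdeal κ K → Prepleasant κ K → (∀ Y, S Y → K Y) → K X

/-- p-point. -/
def PPoint (κ : Cardinal.{0}) (J : Set Ordinal.{0} → Prop) : Prop :=
  ∀ f : Ordinal.{0} → Ordinal.{0}, (∀ ξ : Ordinal.{0}, J {α | α < κ.ord ∧ f α = ξ}) →
    ∃ X, Dual κ J X ∧ ∀ ξ : Ordinal.{0}, BddIn κ {α | α ∈ X ∧ f α = ξ}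

/-- q-point. -/
def QPoint (κ : Cardinal.{0}) (J : Set Ordinal.{0} → Prop) : Prop :=
  ∀ f : Ordinal.{0} → Ordinal.{0}, (∀ ξ : Ordinal.{0}, BddIn κ {α | α < κ.ord ∧ f α = ξ}) →
    ∃ X, Dual κ J X ∧ Set.InjOn f X

/-- `L = {λ + 1 : λ < κ a limit ordinal}`. -/
def LSet (κ : Cardinal.{0}) : Set Ordinal.{0} :=
  {x | ∃ lam : Ordinal.{0}, Order.IsSuccLimit lam ∧ x = lam + 1 ∧ x < κ.ord}

/-- `B(Y) = {α - 1 : α ∈ Y}` for a set `Y` of successor ordinals. -/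
def BSet (Y : Set Ordinal.{0}) : Set Ordinal.{0} := {γ | γ + 1 ∈ Y}

/-- `W = {λ < κ : cof λ = ω}`. -/
def WSet (κ : Cardinal.{0}) : Set Ordinal.{0} :=
  {lam | lam < κ.ord ∧ lam.cof = Cardinal.aleph0}

/-- Węglorz's ideal `J_κ`. -/
def Weglorz (κ : Cardinal.{0}) (X : Set Ordinal.{0}) : Prop :=
  X ⊆ Iio κ.ord ∧ ∃ (f : Ordinal.{0} → Ordinal.{0}) (θ : Cardinal.{0}), θ < κ ∧
    (∀ α ∈ X, α ≠ 0 → f α < α) ∧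
    ∀ ξ : Ordinal.{0}, Cardinal.mk {α : Ordinal.{0} // α ∈ X ∧ f α = ξ} ≤ Cardinal.lift.{1} θ

/-! Bounded sets lie in every `<κ`-complete ideal, so pleasant implies prepleasant. Conversely,
send each `ξ ∈ ∇_{α ∈ A} X_α` to a witness `α ∈ A`; its fibres lie in `X_α ∪ {α}`, hence in `I`,
so the p-point property gives `Y ∈ I*` on which all fibres are bounded. On `Y` the diagonal union
is then the diagonal union over `A` of these bounded fibres, which prepleasantness puts in `I`. -/

section

variable {κ : Cardinal.{0}} {J : Set Ordinal.{0} → Prop}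
  {A : Set Ordinal.{0}} {X : Ordinal.{0} → Set Ordinal.{0}}

theorem IsIdeal.empty_mem (hJ : IsIdeal κ J) (hκ : 0 < κ.ord) : J ∅ :=
  hJ.2.1 _ _ (hJ.2.2.2.1 0 hκ) (empty_subset _)

theorem IsIdeal.mem_of_bddIn (hJ : IsIdeal κ J) {S : Set Ordinal.{0}} (hS : BddIn κ S) : J S := by
  obtain ⟨θ, hθκ, hSθ⟩ := hS
  have hempty : J ∅ := hJ.empty_mem (zero_le.trans_lt hθκ)
  obtain ⟨-, hmono, -, hsing, hsmall⟩ := hJ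
  have hpoints : ∀ β, J ({β} ∩ S) := fun β => by
    by_cases hβ : β ∈ S
    · exact hmono _ _ (hsing β ((hSθ hβ).trans hθκ)) inter_subset_left
    · exact hmono _ _ hempty fun ξ hξ => hβ (hξ.1 ▸ hξ.2)
  refine hmono _ _ (hsmall θ (Cardinal.lt_ord.mp hθκ) _ hpoints) fun ξ hξ => ?_
  exact mem_biUnion (hSθ hξ) ⟨rfl, hξ⟩

theorem IsIdeal.mem_of_inter_dual (hJ : IsIdeal κ J) {Z Y : Set Ordinal.{0}}
    (hZ : Z ⊆ Iio κ.ord) (hY : Dual κ J Y) (hZY : J (Z ∩ Y)) : J Z := by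
  obtain ⟨-, hmono, hunion, -⟩ := hJ
  refine hmono _ _ (hunion _ _ hZY hY.2) fun ξ hξ => ?_
  by_cases h : ξ ∈ Y
  · exact Or.inl ⟨hξ, h⟩
  · exact Or.inr ⟨hZ hξ, h⟩

theorem IsIdeal.diagU_subset_Iio (hJ : IsIdeal κ J) (hX : ∀ α, J (X α)) :
    diagU A X ⊆ Iio κ.ord :=
  fun _ ⟨α, _, _, hξ⟩ => hJ.1 _ (hX α) hξ

/-- Off the diagonal union this is the identity, so that its fibres stay in the ideal. -/
noncomputable def diagWitness (A : Set Ordinal.{0}) (X : Ordinal.{0} → Set Ordinal.{0})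
    (ξ : Ordinal.{0}) : Ordinal.{0} :=
  open Classical in if h : ξ ∈ diagU A X then h.choose else ξ

theorem diagWitness_spec {ξ : Ordinal.{0}} (h : ξ ∈ diagU A X) :
    diagWitness A X ξ < ξ ∧ diagWitness A X ξ ∈ A ∧ ξ ∈ X (diagWitness A X ξ) := by
  rw [diagWitness, dif_pos h]
  exact h.choose_spec

theorem diagWitness_fiber_subset (ξ : Ordinal.{0}) :
    {α | diagWitness A X α = ξ} ⊆ X ξ ∪ {ξ} := by
  intro α hα
  by_cases h : α ∈ diagU A X
  · exact Or.inl (hα ▸ (diagWitness_spec h).2.2)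
  · rw [mem_ofPred_eq, diagWitness, dif_neg h] at hα
    exact Or.inr hα

theorem IsIdeal.fiber_diagWitness_mem (hJ : IsIdeal κ J) (hX : ∀ α, J (X α)) (ξ : Ordinal.{0}) :
    J {α | α < κ.ord ∧ diagWitness A X α = ξ} := by
  obtain ⟨-, hmono, hunion, hsing, -⟩ := hJ
  have hsmall : J (X ξ ∪ ({ξ} ∩ Iio κ.ord)) := by
    refine hunion _ _ (hX ξ) ?_
    by_cases hξ : ξ < κ.ord
    · exact hmono _ _ (hsing ξ hξ) inter_subset_left
    · exact hmono _ _ (hX ξ) fun η hη => absurd (hη.1 ▸ hη.2) hξ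
  refine hmono _ _ hsmall fun α ⟨hακ, hα⟩ => ?_
  rcases diagWitness_fiber_subset ξ hα with h | h
  · exact Or.inl h
  · exact Or.inr ⟨h, hακ⟩

theorem diagU_inter_subset (Y : Set Ordinal.{0}) :
    diagU A X ∩ Y ⊆ diagU A (fun α => {ξ | ξ ∈ Y ∧ diagWitness A X ξ = α}) :=
  fun ξ ⟨hξ, hξY⟩ =>
    ⟨diagWitness A X ξ, (diagWitness_spec hξ).1, (diagWitness_spec hξ).2.1, hξY, rfl⟩

theorem Pleasant.prepleasant (hJ : IsIdeal κ J) (h : Pleasant J) : Prepleasant κ J :=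
  fun Q hQ B hB => h Q hQ B fun α => hJ.mem_of_bddIn (hB α)

theorem Prepleasant.pleasant_of_pPoint (hJ : IsIdeal κ J) (hpp : PPoint κ J) (h : Prepleasant κ J) :
    Pleasant J := by
  intro A hA X hX
  obtain ⟨Y, hY, hfibers⟩ := hpp (diagWitness A X) (hJ.fiber_diagWitness_mem hX)
  have hinter : J (diagU A X ∩ Y) := hJ.2.1 _ _ (h A hA _ hfibers) (diagU_inter_subset Y)
  exact hJ.mem_of_inter_dual (hJ.diagU_subset_Iio hX) hY hinter

end

theorem stmt8_general (κ : Cardinal.{0})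
    (J : Set Ordinal.{0} → Prop) (hJ : IsIdeal κ J)
    (hpp : PPoint κ J) :
    Prepleasant κ J ↔ Pleasant J :=
  ⟨Prepleasant.pleasant_of_pPoint hJ hpp, Pleasant.prepleasant hJ⟩

/-- If `I` is a p-point then `I` is prepleasant iff `I` is pleasant. -/
theorem stmt8 (κ : Cardinal.{0}) (hreg : κ.IsRegular) (hunc : Cardinal.aleph0 < κ)
    (J : Set Ordinal.{0} → Prop) (hJ : IsIdeal κ J) (hprop : Proper κ J)
    (hpp : PPoint κ J) :
    Prepleasant κ J ↔ Pleasant J :=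
  stmt8_general κ J hJ hpp

end PaperIdeals
end

section
/- If I is a quasinormal prepleasant ideal on κ, then I is pleasant, and hence normal. -/
open Set

namespace PaperIdeals

/-!
Given `A ∈ I` and `X_β ∈ I`, quasinormality applied to the accumulated sets `⋃_{β ≤ γ} X_β`
yields `Q ∈ I*` whose diagonal union of them is in `I`. A point `ξ ∈ X_β` with `β ∈ A`, `β < ξ`
is caught by that diagonal union as soon as some `γ ∈ Q` lies in `[β, ξ)`; otherwise `ξ` is at
most the least element of `Q` above `β` (which exists as `Q` is unbounded), and these bounded
pieces are handled by prepleasantness. Normality then follows by splitting `κ` into a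
`Q ∈ I*` given by quasinormality and its complement `κ \ Q ∈ I`.
-/

section DiagonalUnion

variable {A Q : Set Ordinal.{0}} {X Y : Ordinal.{0} → Set Ordinal.{0}}

theorem diagU_congr (h : ∀ α ∈ A, X α = Y α) : diagU A X = diagU A Y := by
  ext ξ
  constructor <;> rintro ⟨α, hαξ, hαA, hξ⟩
  · exact ⟨α, hαξ, hαA, h α hαA ▸ hξ⟩
  · exact ⟨α, hαξ, hαA, (h α hαA).symm ▸ hξ⟩

theorem diagU_iUnion_mem {B : Set Ordinal.{0}} (h : A ⊆ B) :
    diagU A (fun α => ⋃ (_ : α ∈ B), X α) = diagU A X :=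
  diagU_congr fun α hα => iSup_pos (f := fun _ => X α) (h hα)

theorem diagU_mono_left {B : Set Ordinal.{0}} (h : A ⊆ B) : diagU A X ⊆ diagU B X :=
  fun _ ⟨α, hαξ, hαA, hξ⟩ => ⟨α, hαξ, h hαA, hξ⟩

theorem diagU_union {B : Set Ordinal.{0}} : diagU (A ∪ B) X = diagU A X ∪ diagU B X := by
  ext ξ
  constructor
  · rintro ⟨α, hαξ, hαA | hαB, hξ⟩
    exacts [Or.inl ⟨α, hαξ, hαA, hξ⟩, Or.inr ⟨α, hαξ, hαB, hξ⟩]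
  · rintro (⟨α, hαξ, hαA, hξ⟩ | ⟨α, hαξ, hαB, hξ⟩)
    exacts [⟨α, hαξ, Or.inl hαA, hξ⟩, ⟨α, hαξ, Or.inr hαB, hξ⟩]

theorem diagU_subset_diagU_biUnion_Iic_union :
    diagU A X ⊆ diagU Q (fun γ => ⋃ β ∈ Iic γ, X β) ∪
      diagU A (fun β => {ξ ∈ X β | ∀ γ ∈ Q, β ≤ γ → ξ ≤ γ}) := by
  rintro ξ ⟨β, hβξ, hβA, hξ⟩
  by_cases hQ : ∃ γ ∈ Q, β ≤ γ ∧ γ < ξ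
  · obtain ⟨γ, hγQ, hβγ, hγξ⟩ := hQ
    exact Or.inl ⟨γ, hγξ, hγQ, mem_biUnion (show β ∈ Iic γ from hβγ) hξ⟩
  · push Not at hQ
    exact Or.inr ⟨β, hβξ, hβA, hξ, hQ⟩

end DiagonalUnion

theorem bddIn_of_subset_Iic {κ : Cardinal.{0}} (hκ : Cardinal.aleph0 ≤ κ) {γ : Ordinal.{0}}
    (hγ : γ < κ.ord) {S : Set Ordinal.{0}} (hS : S ⊆ Iic γ) : BddIn κ S :=
  ⟨Order.succ γ, (Cardinal.isSuccLimit_ord hκ).succ_lt hγ, (Order.Iio_succ γ).symm ▸ hS⟩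

theorem Prepleasant.diagU_of_forall_mem_bddIn {κ : Cardinal.{0}} {J : Set Ordinal.{0} → Prop}
    (hpre : Prepleasant κ J) (hκ : κ ≠ 0) {A : Set Ordinal.{0}} (hA : J A)
    {B : Ordinal.{0} → Set Ordinal.{0}} (hB : ∀ α ∈ A, BddIn κ (B α)) : J (diagU A B) := by
  have h := hpre A hA (fun α => ⋃ (_ : α ∈ A), B α) fun α => by
    by_cases hα : α ∈ A
    · simpa [hα] using hB α hα
    · simpa [hα] using ⟨0, Cardinal.ord_pos.mpr hκ.bot_lt, empty_subset _⟩
  rwa [diagU_iUnion_mem subset_rfl] at h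

namespace IsIdeal

variable {κ : Cardinal.{0}} {J : Set Ordinal.{0} → Prop} (hJ : IsIdeal κ J)
include hJ

theorem subset_Iio {X : Set Ordinal.{0}} (hX : J X) : X ⊆ Iio κ.ord := hJ.1 X hX

theorem mono {X Y : Set Ordinal.{0}} (hX : J X) (hYX : Y ⊆ X) : J Y := hJ.2.1 X Y hX hYX

theorem union {X Y : Set Ordinal.{0}} (hX : J X) (hY : J Y) : J (X ∪ Y) := hJ.2.2.1 X Y hX hY

theorem empty (hκ : κ ≠ 0) : J ∅ :=
  hJ.mono (hJ.2.2.2.1 0 (Cardinal.ord_pos.mpr hκ.bot_lt)) (empty_subset _)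

theorem biUnion_Iio {θ : Ordinal.{0}} (hθ : θ.card < κ) {X : Ordinal.{0} → Set Ordinal.{0}}
    (hX : ∀ α < θ, J (X α)) : J (⋃ α ∈ Iio θ, X α) := by
  have hJ0 : J ∅ := hJ.empty (zero_le.trans_lt hθ).ne'
  have h := hJ.2.2.2.2 θ hθ (fun α => ⋃ (_ : α < θ), X α) fun α => by
    by_cases hα : α < θ
    · simpa [hα] using hX α hα
    · simpa [hα] using hJ0
  refine hJ.mono h (iUnion₂_mono fun α hα => ?_)
  exact subset_iUnion_of_subset hα subset_rfl

theorem Iio_of_lt {θ : Ordinal.{0}} (hθ : θ < κ.ord) : J (Iio θ) := by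
  have h := hJ.biUnion_Iio (Cardinal.lt_ord.mp hθ) fun α hα => hJ.2.2.2.1 α (hα.trans hθ)
  rwa [biUnion_of_singleton] at h

theorem biUnion_Iic (hκ : Cardinal.aleph0 ≤ κ) {γ : Ordinal.{0}} (hγ : γ < κ.ord)
    {X : Ordinal.{0} → Set Ordinal.{0}} (hX : ∀ α, J (X α)) : J (⋃ β ∈ Iic γ, X β) := by
  rw [← Order.Iio_succ]
  exact hJ.biUnion_Iio (Cardinal.lt_ord.mp ((Cardinal.isSuccLimit_ord hκ).succ_lt hγ))
    fun α _ => hX α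

theorem exists_gt_of_dual (hκ : Cardinal.aleph0 ≤ κ) (hprop : Proper κ J) {Q : Set Ordinal.{0}}
    (hQ : Dual κ J Q) {η : Ordinal.{0}} (hη : η < κ.ord) : ∃ γ ∈ Q, η < γ := by
  by_contra! hQη
  have hcover : Iio κ.ord ⊆ (Iio κ.ord \ Q) ∪ Iio (Order.succ η) := fun x hx => by
    by_cases hxQ : x ∈ Q
    exacts [Or.inr (Order.lt_succ_of_le (hQη x hxQ)), Or.inl ⟨hx, hxQ⟩]
  have hη' := hJ.Iio_of_lt ((Cardinal.isSuccLimit_ord hκ).succ_lt hη)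
  exact hprop (hJ.mono (hJ.union hQ.2 hη') hcover)

theorem exists_dual_diagU (hκ : κ ≠ 0) (hq : Quasinormal κ J)
    {X : Ordinal.{0} → Set Ordinal.{0}} (hX : ∀ α < κ.ord, J (X α)) :
    ∃ Q, Dual κ J Q ∧ J (diagU Q X) := by
  obtain ⟨Q, hQ, hDQ⟩ := hq (fun α => ⋃ (_ : α ∈ Iio κ.ord), X α) fun α => by
    by_cases hα : α < κ.ord
    · simpa [hα] using hX α hα
    · simpa [hα] using hJ.empty hκ
  exact ⟨Q, hQ, diagU_iUnion_mem hQ.1 ▸ hDQ⟩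

theorem pleasant (hκ : Cardinal.aleph0 ≤ κ) (hprop : Proper κ J) (hq : Quasinormal κ J)
    (hpre : Prepleasant κ J) : Pleasant J := by
  have hκ0 : κ ≠ 0 := (Cardinal.aleph0_pos.trans_le hκ).ne'
  intro A hA X hX
  obtain ⟨Q, hQ, hDQ⟩ := hJ.exists_dual_diagU hκ0 hq (X := fun γ => ⋃ β ∈ Iic γ, X β)
    fun γ hγ => hJ.biUnion_Iic hκ hγ hX
  have hbdd : J (diagU A fun β => {ξ ∈ X β | ∀ γ ∈ Q, β ≤ γ → ξ ≤ γ}) :=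
    hpre.diagU_of_forall_mem_bddIn hκ0 hA fun β hβ => by
      obtain ⟨γ, hγQ, hβγ⟩ := hJ.exists_gt_of_dual hκ hprop hQ (hJ.subset_Iio hA hβ)
      exact bddIn_of_subset_Iic hκ (hQ.1 hγQ) fun ξ hξ => hξ.2 γ hγQ hβγ.le
  exact hJ.mono (hJ.union hDQ hbdd) diagU_subset_diagU_biUnion_Iic_union

theorem normal (hq : Quasinormal κ J) (hpl : Pleasant J) : Normal κ J := by
  intro X hX
  obtain ⟨Q, hQ, hDQ⟩ := hq X hX
  refine hJ.mono (hJ.union hDQ (hpl _ hQ.2 X hX)) ?_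
  rw [← diagU_union]
  exact diagU_mono_left (sdiff_subset_iff.mp subset_rfl)

end IsIdeal

theorem stmt9_general (κ : Cardinal.{0}) (hunc : Cardinal.aleph0 < κ)
    (J : Set Ordinal.{0} → Prop) (hJ : IsIdeal κ J) (hprop : Proper κ J)
    (hq : Quasinormal κ J) (hpre : Prepleasant κ J) :
    Pleasant J ∧ Normal κ J :=
  have hpl := hJ.pleasant hunc.le hprop hq hpre
  ⟨hpl, hJ.normal hq hpl⟩

/-- A quasinormal prepleasant ideal is pleasant, and therefore normal. -/
theorem stmt9 (κ : Cardinal.{0}) (hreg : κ.IsRegular) (hunc : Cardinal.aleph0 < κ)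
    (J : Set Ordinal.{0} → Prop) (hJ : IsIdeal κ J) (hprop : Proper κ J)
    (hq : Quasinormal κ J) (hpre : Prepleasant κ J) :
    Pleasant J ∧ Normal κ J :=
  stmt9_general κ hunc J hJ hprop hq hpre

end PaperIdeals
end
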